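/- arXiv:1906.00096 — 2 statements merged into one kernel-verified Lean document; each statement's English description precedes it below -/
import Mathlib

section
/- For every admissible Iterated Function System (Γ,p) with Markov operator P, there exist M > 0 and α ∈ (0,1) such that N_{M,α} is nonempty and P(N_{M,α}) ⊆ N_{M,α}. -/
open MeasureTheory Set Filter Topology

noncomputable section

/-- The Markov operator of an iterated function system `(g, p)` on `[0,1]`. -/
def markovOp {k : ℕ} (g : Fin k → ℝ → ℝ) (p : Fin k → ℝ) (μ : Measure ℝ) : Measure ℝ :=
  ∑ i : Fin k, ENNReal.ofReal (p i) • Measure.map (g i) μ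

/-- `p` is a probability vector. -/
def ProbVec {k : ℕ} (p : Fin k → ℝ) : Prop :=
  (∀ i, 0 ≤ p i) ∧ ∑ i : Fin k, p i = 1

/-- Membership in `M₁(0,1)`: Borel probability measures on `[0,1]` giving full mass
to the open interval `(0,1)`. -/
def MemM1 (μ : Measure ℝ) : Prop :=
  IsProbabilityMeasure μ ∧ μ (Ioo (0 : ℝ) 1) = 1

/-- The set `N_{M,α}`. -/
def Nset (M α : ℝ) : Set (Measure ℝ) :=
  {μ | MemM1 μ ∧ ∀ x ∈ Icc (0 : ℝ) 1,
    μ (Icc (0 : ℝ) x) ≤ ENNReal.ofReal (M * x ^ α) ∧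
    μ (Icc (1 - x) 1) ≤ ENNReal.ofReal (M * x ^ α)}

/-- The class `C⁺_β`: continuous nondecreasing maps of `[0,1]` fixing `0` and `1`,
continuously differentiable on `[0,β]` and `[1-β,1]`. -/
structure CPlus (β : ℝ) (g : ℝ → ℝ) : Prop where
  mapsTo : MapsTo g (Icc (0 : ℝ) 1) (Icc (0 : ℝ) 1)
  contOn : ContinuousOn g (Icc (0 : ℝ) 1)
  mono : MonotoneOn g (Icc (0 : ℝ) 1)
  map_zero : g 0 = 0
  map_one : g 1 = 1
  c1_left : ContDiffOn ℝ 1 g (Icc (0 : ℝ) β)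
  c1_right : ContDiffOn ℝ 1 g (Icc (1 - β) 1)

/-- `g` is a homeomorphism of `[0,1]` (a continuous bijection of the compact
interval; continuity of the inverse is automatic). -/
def IsIccHomeo (g : ℝ → ℝ) : Prop :=
  MapsTo g (Icc (0 : ℝ) 1) (Icc (0 : ℝ) 1) ∧ InjOn g (Icc (0 : ℝ) 1) ∧
    SurjOn g (Icc (0 : ℝ) 1) (Icc (0 : ℝ) 1)

/-- Admissible iterated function system generated by homeomorphisms in `C⁺_β`:
strictly positive probabilities, maps moving every interior point both down and up,
and positive Lyapunov exponents at the common fixed points `0` and `1`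
(the one-sided derivatives there being positive). -/
structure Admissible (β : ℝ) {k : ℕ} (g : Fin k → ℝ → ℝ) (p : Fin k → ℝ) : Prop where
  cplus : ∀ i, CPlus β (g i)
  homeo : ∀ i, IsIccHomeo (g i)
  p_pos : ∀ i, 0 < p i
  p_sum : ∑ i : Fin k, p i = 1
  below : ∀ x ∈ Ioo (0 : ℝ) 1, ∃ i, g i x < x
  above : ∀ x ∈ Ioo (0 : ℝ) 1, ∃ j, x < g j x
  deriv0_pos : ∀ i, 0 < derivWithin (g i) (Icc (0 : ℝ) 1) 0
  deriv1_pos : ∀ i, 0 < derivWithin (g i) (Icc (0 : ℝ) 1) 1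
  lyap0 : 0 < ∑ i : Fin k, p i * Real.log (derivWithin (g i) (Icc (0 : ℝ) 1) 0)
  lyap1 : 0 < ∑ i : Fin k, p i * Real.log (derivWithin (g i) (Icc (0 : ℝ) 1) 1)

/-- Composition of the maps of an IFS along a finite word:
`wordComp g [i_n, …, i_1] = g i_n ∘ ⋯ ∘ g i_1`. -/
def wordComp {k : ℕ} (g : Fin k → ℝ → ℝ) : List (Fin k) → ℝ → ℝ
  | [], x => x
  | i :: w, x => g i (wordComp g w x)

/-- Composition of the first `n` maps along an infinite word `ω`:
`iterComp g ω n = g (ω (n-1)) ∘ ⋯ ∘ g (ω 0)`. -/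
def iterComp {k : ℕ} (g : Fin k → ℝ → ℝ) (ω : ℕ → Fin k) : ℕ → ℝ → ℝ
  | 0 => id
  | n + 1 => g (ω n) ∘ iterComp g ω n

/-- Supremum of `|f|` over a set `K`. -/
def supOn (K : Set ℝ) (f : ℝ → ℝ) : ℝ :=
  sSup ((fun x => |f x|) '' K)

/-- The Fortet–Mourier distance: the Fortet–Mourier norm of `μ - ν`. -/
def FMdist (μ ν : Measure ℝ) : ℝ :=
  sSup {r | ∃ f : ℝ → ℝ, (∀ x, |f x| ≤ 1) ∧ LipschitzWith 1 f ∧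
    r = (∫ x, f x ∂μ) - ∫ x, f x ∂ν}

/-- The distance `d₀` between two iterated function systems. -/
def dzero {k : ℕ} (S T : Fin k → ℝ → ℝ) (p q : Fin k → ℝ) : ℝ :=
  ∑ i : Fin k, (|p i - q i| + supOn (Icc (0 : ℝ) 1) (fun x => S i x - T i x))

/-- `g` is absolutely continuous on `[0,1]`. -/
def AbsCont (g : ℝ → ℝ) : Prop :=
  ∀ ε > 0, ∃ δ > 0, ∀ n : ℕ, ∀ a b : Fin n → ℝ,
    (∀ i, 0 ≤ a i ∧ a i ≤ b i ∧ b i ≤ 1) →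
    (Pairwise fun i j => Disjoint (Ioo (a i) (b i)) (Ioo (a j) (b j))) →
    ∑ i, (b i - a i) < δ → ∑ i, |g (b i) - g (a i)| < ε

/-- Membership in `M₁^ε`: some Borel subset of `[0,1]` of Lebesgue measure `< ε`
carries `μ`-mass `> 1 - ε/2`. -/
def MemM1eps (ε : ℝ) (μ : Measure ℝ) : Prop :=
  ∃ A : Set ℝ, MeasurableSet A ∧ A ⊆ Icc (0 : ℝ) 1 ∧
    volume A < ENNReal.ofReal ε ∧ ENNReal.ofReal (1 - ε / 2) < μ A

/-- Clamping of a real number to `[0,1]`. -/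
def clampI (x : ℝ) : ℝ := max 0 (min 1 x)

/-- A point of the space `F₀`: a `k`-tuple of homeomorphisms of `[0,1]` in `C⁺_β`
(together with their inverses) and a probability vector.  The maps are normalized
outside `[0,1]` by clamping, so that they are determined by their restrictions
to `[0,1]`. -/
structure Sys (β : ℝ) (k : ℕ) where
  g : Fin k → ℝ → ℝ
  ginv : Fin k → ℝ → ℝ
  p : Fin k → ℝ
  prob : ProbVec p
  cplus : ∀ i, CPlus β (g i)
  ginv_mapsTo : ∀ i, MapsTo (ginv i) (Icc (0 : ℝ) 1) (Icc (0 : ℝ) 1)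
  left_inv : ∀ i, ∀ x ∈ Icc (0 : ℝ) 1, ginv i (g i x) = x
  right_inv : ∀ i, ∀ y ∈ Icc (0 : ℝ) 1, g i (ginv i y) = y
  g_clamp : ∀ i x, g i x = g i (clampI x)
  ginv_clamp : ∀ i x, ginv i x = ginv i (clampI x)

/-- The metric `d` on the space of systems. -/
def dSys {β : ℝ} {k : ℕ} (A B : Sys β k) : ℝ :=
  ∑ i : Fin k,
    (|A.p i - B.p i|
      + supOn (Icc (0 : ℝ) 1) (fun x => A.g i x - B.g i x)
      + supOn (Icc (0 : ℝ) 1) (fun x => A.ginv i x - B.ginv i x)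
      + max
          (supOn (Icc (0 : ℝ) β)
            (fun x => derivWithin (A.g i) (Icc (0 : ℝ) β) x -
              derivWithin (B.g i) (Icc (0 : ℝ) β) x))
          (supOn (Icc (1 - β) 1)
            (fun x => derivWithin (A.g i) (Icc (1 - β) 1) x -
              derivWithin (B.g i) (Icc (1 - β) 1) x)))

/-- The set `F`: admissible systems all of whose maps are absolutely continuous. -/
def Fset (β : ℝ) (k : ℕ) : Set (Sys β k) :=
  {A | Admissible β A.g A.p ∧ ∀ i, AbsCont (A.g i)}

/-- Closure of a set of systems with respect to the metric `dSys`. -/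
def closureSys {β : ℝ} {k : ℕ} (S : Set (Sys β k)) : Set (Sys β k) :=
  {A | ∀ ε > 0, ∃ B ∈ S, dSys A B < ε}

/-- `S` is nowhere dense in the subspace `X` (with respect to `dSys`):
every ball centered in `X` contains a point of `X` some ball around which
misses `S ∩ X`. -/
def NowhereDenseIn {β : ℝ} {k : ℕ} (X S : Set (Sys β k)) : Prop :=
  ∀ A ∈ X, ∀ ε > 0, ∃ B ∈ X, dSys A B < ε ∧ ∃ δ > 0, ∀ C ∈ X ∩ S, δ ≤ dSys B C

/-- Cesàro averages `(ν + Pν + ⋯ + P^{n-1}ν)/n` of a measure under the Markov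
operator of an IFS. -/
def cesaro {k : ℕ} (g : Fin k → ℝ → ℝ) (p : Fin k → ℝ) (ν : Measure ℝ) (n : ℕ) :
    Measure ℝ :=
  (n : ENNReal)⁻¹ • ∑ j ∈ Finset.range n, (fun m => markovOp g p m)^[j] ν


/-! Near the common fixed point `0`, every `g i` dominates a line `x ↦ t i * x` with
`t i < g i'(0)`, so `g i ⁻¹' [0, x] ⊆ [0, x / t i]` and
`(Pμ)[0, x] ≤ ∑ p i μ[0, x / t i] ≤ M x ^ α ∑ p i (t i) ^ (-α)`.
The function `α ↦ ∑ p i (g i'(0)) ^ (-α)` equals `1` at `α = 0` with derivative minus the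
Lyapunov exponent there, so it drops below `1` for small `α > 0`, and the sum stays `≤ 1` after
lowering every slope by a common factor. Where the linear bound is unavailable, `M x ^ α ≥ 1`
holds trivially once `M` is large. The endpoint `1` is handled in the same way. -/

theorem HasDerivWithinAt.eventually_mul_sub_lt {f : ℝ → ℝ} {f' t a : ℝ}
    (hf : HasDerivWithinAt f f' (Ioi a) a) (ht : t < f') :
    ∀ᶠ x in 𝓝[>] a, t * (x - a) < f x - f a := by
  have hslope := (hasDerivWithinAt_iff_tendsto_slope' self_notMem_Ioi).1 hf
  filter_upwards [hslope.eventually (lt_mem_nhds ht), self_mem_nhdsWithin] with x hx hax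
  rw [slope_def_field, lt_div_iff₀ (sub_pos.2 hax)] at hx
  exact hx

theorem eventually_sum_mul_rpow_neg_lt_one {ι : Type*} [Fintype ι] {p d : ι → ℝ}
    (hd : ∀ i, 0 < d i) (hp : ∑ i, p i = 1) (hlyap : 0 < ∑ i, p i * Real.log (d i)) :
    ∀ᶠ α in 𝓝[>] (0 : ℝ), ∑ i, p i * d i ^ (-α) < 1 := by
  have hderiv : HasDerivAt (fun α : ℝ => ∑ i, p i * d i ^ (-α))
      (∑ i, p i * -Real.log (d i)) 0 := by
    refine HasDerivAt.fun_sum fun i _ => ?_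
    have h := ((Real.hasStrictDerivAt_const_rpow (hd i) (-0)).hasDerivAt.comp (0 : ℝ)
      (hasDerivAt_neg (0 : ℝ))).const_mul (p i)
    simpa [Function.comp_def] using h
  have hneg := hderiv.neg.hasDerivWithinAt (s := Ioi 0)
  simp only [Finset.sum_neg_distrib, neg_neg, mul_neg] at hneg
  filter_upwards [hneg.eventually_mul_sub_lt hlyap] with α hα
  simp only [Pi.neg_apply, zero_mul, neg_zero, Real.rpow_zero, mul_one, hp] at hα
  linarith

theorem exists_sum_mul_rpow_neg_le_one {ι : Type*} [Fintype ι] {p d : ι → ℝ} {α : ℝ}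
    (hp : ∀ i, 0 ≤ p i) (hd : ∀ i, 0 < d i) (hα : 0 < α)
    (h : ∑ i, p i * d i ^ (-α) < 1) :
    ∃ θ ∈ Ioo (0 : ℝ) 1, ∑ i, p i * (θ * d i) ^ (-α) ≤ 1 := by
  set c := ∑ i, p i * d i ^ (-α)
  have hc : 0 ≤ c := Finset.sum_nonneg fun i _ => mul_nonneg (hp i) (Real.rpow_nonneg (hd i).le _)
  -- the `max` keeps `θ` positive when `c = 0`
  set θ := max (c ^ α⁻¹) (1 / 2)
  have hθ : 0 < θ := lt_max_of_lt_right (by norm_num)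
  refine ⟨θ, ⟨hθ, max_lt (Real.rpow_lt_one hc h (inv_pos.2 hα)) (by norm_num)⟩, ?_⟩
  have hcθ : c ≤ θ ^ α := by
    calc c = (c ^ α⁻¹) ^ α := by
          rw [← Real.rpow_mul hc, inv_mul_cancel₀ hα.ne', Real.rpow_one]
      _ ≤ θ ^ α := Real.rpow_le_rpow (by positivity) (le_max_left _ _) hα.le
  calc ∑ i, p i * (θ * d i) ^ (-α) = c / θ ^ α := by
        simp_rw [Real.mul_rpow hθ.le (hd _).le, Real.rpow_neg hθ.le, c, Finset.sum_div]
        refine Finset.sum_congr rfl fun i _ => ?_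
        field_simp
    _ ≤ 1 := div_le_one_of_le₀ hcθ (by positivity)

theorem one_le_rpow_neg_mul_rpow {γ y α : ℝ} (hγ : 0 < γ) (hy : γ ≤ y) (hα : 0 ≤ α) :
    1 ≤ γ ^ (-α) * y ^ α := by
  rw [Real.rpow_neg hγ.le, ← div_eq_inv_mul, ← Real.div_rpow (hγ.le.trans hy) hγ.le]
  exact Real.one_le_rpow ((one_le_div hγ).2 hy) hα

namespace CPlus

variable {β : ℝ} {g : ℝ → ℝ}

theorem hasDerivWithinAt_Ioi_zero (hg : CPlus β g) (hβ : 0 < β) :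
    HasDerivWithinAt g (derivWithin g (Icc 0 1) 0) (Ioi 0) 0 := by
  have hdiff : DifferentiableWithinAt ℝ g (Icc 0 β) 0 :=
    hg.c1_left.differentiableOn one_ne_zero 0 (left_mem_Icc.2 hβ.le)
  have hβmem : Icc 0 β ∈ 𝓝[Icc 0 1] (0 : ℝ) :=
    nhdsWithin_mono _ Icc_subset_Ici_self (Icc_mem_nhdsGE hβ)
  exact (hdiff.mono_of_mem_nhdsWithin hβmem).hasDerivWithinAt.mono_of_mem_nhdsWithin
    (mem_of_superset (Ioo_mem_nhdsGT one_pos) Ioo_subset_Icc_self)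

theorem hasDerivWithinAt_Iio_one (hg : CPlus β g) (hβ : 0 < β) :
    HasDerivWithinAt g (derivWithin g (Icc 0 1) 1) (Iio 1) 1 := by
  have hdiff : DifferentiableWithinAt ℝ g (Icc (1 - β) 1) 1 :=
    hg.c1_right.differentiableOn one_ne_zero 1 (right_mem_Icc.2 (by linarith))
  have hβmem : Icc (1 - β) 1 ∈ 𝓝[Icc 0 1] (1 : ℝ) :=
    nhdsWithin_mono _ Icc_subset_Iic_self (Icc_mem_nhdsLE (by linarith))
  exact (hdiff.mono_of_mem_nhdsWithin hβmem).hasDerivWithinAt.mono_of_mem_nhdsWithin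
    (mem_of_superset (Ioo_mem_nhdsLT one_pos) Ioo_subset_Icc_self)

theorem eventually_mul_lt_self {t : ℝ} (hg : CPlus β g) (hβ : 0 < β)
    (ht : t < derivWithin g (Icc 0 1) 0) : ∀ᶠ x in 𝓝[>] 0, t * x < g x := by
  simpa [hg.map_zero] using (hg.hasDerivWithinAt_Ioi_zero hβ).eventually_mul_sub_lt ht

theorem eventually_mul_lt_one_sub {t : ℝ} (hg : CPlus β g) (hβ : 0 < β)
    (ht : t < derivWithin g (Icc 0 1) 1) : ∀ᶠ x in 𝓝[>] 0, t * x < 1 - g (1 - x) := by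
  have hrefl :
      HasDerivWithinAt (fun x => 1 - g (1 - x)) (derivWithin g (Icc 0 1) 1) (Ioi 0) 0 := by
    have hmaps : MapsTo (fun x : ℝ => 1 - id x) (Ioi 0) (Iio 1) := fun x hx => by
      simpa using mem_Ioi.1 hx
    have h := ((hg.hasDerivWithinAt_Iio_one hβ).comp_of_eq (0 : ℝ)
      ((hasDerivAt_id (0 : ℝ)).const_sub 1).hasDerivWithinAt hmaps (by norm_num)).const_sub 1
    simpa [Function.comp_def] using h
  simpa [hg.map_one] using hrefl.eventually_mul_sub_lt ht

end CPlus

theorem MemM1.measure_compl_Ioo {μ : Measure ℝ} (hμ : MemM1 μ) : μ (Ioo 0 1)ᶜ = 0 :=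
  haveI := hμ.1
  (prob_compl_eq_zero_iff measurableSet_Ioo).2 hμ.2

section Tails

variable {M α γ t x : ℝ} {μ : Measure ℝ} {g : ℝ → ℝ}

theorem measure_preimage_Icc_zero_le (hμ : μ ∈ Nset M α) (hγ : γ ∈ Ioc 0 1)
    (hM : ∀ y, γ ≤ y → 1 ≤ M * y ^ α) (ht : 0 < t) (hg : MonotoneOn g (Icc 0 1))
    (hgt : ∀ y ∈ Ioc 0 γ, t * y < g y) (hx : 0 ≤ x) :
    μ (g ⁻¹' Icc 0 x) ≤ ENNReal.ofReal (M * (x / t) ^ α) := by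
  have := hμ.1.1
  rcases lt_or_ge (x / t) γ with hxγ | hγx
  · have hsub : g ⁻¹' Icc 0 x ∩ Ioo 0 1 ⊆ Icc 0 (x / t) := by
      rintro y ⟨⟨-, hgy⟩, hy0, hy1⟩
      rw [mem_Icc, le_div_iff₀ ht]
      refine ⟨hy0.le, ?_⟩
      rcases le_or_gt y γ with hyγ | hγy
      · linarith [hgt y ⟨hy0, hyγ⟩]
      · have hγ_lt := hgt γ ⟨hγ.1, le_rfl⟩
        have hmono := hg ⟨hγ.1.le, hγ.2⟩ ⟨hy0.le, hy1.le⟩ hγy.le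
        rw [div_lt_iff₀ ht] at hxγ
        linarith
    calc μ (g ⁻¹' Icc 0 x) = μ (g ⁻¹' Icc 0 x ∩ Ioo 0 1) :=
          (measure_inter_conull hμ.1.measure_compl_Ioo).symm
      _ ≤ μ (Icc 0 (x / t)) := measure_mono hsub
      _ ≤ _ := (hμ.2 _ ⟨div_nonneg hx ht.le, hxγ.le.trans hγ.2⟩).1
  · exact prob_le_one.trans (ENNReal.one_le_ofReal.2 (hM _ hγx))

theorem measure_preimage_Icc_one_le (hμ : μ ∈ Nset M α) (hγ : γ ∈ Ioc 0 1)
    (hM : ∀ y, γ ≤ y → 1 ≤ M * y ^ α) (ht : 0 < t) (hg : MonotoneOn g (Icc 0 1))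
    (hgt : ∀ y ∈ Ioc 0 γ, t * y < 1 - g (1 - y)) (hx : 0 ≤ x) :
    μ (g ⁻¹' Icc (1 - x) 1) ≤ ENNReal.ofReal (M * (x / t) ^ α) := by
  have := hμ.1.1
  rcases lt_or_ge (x / t) γ with hxγ | hγx
  · have hsub : g ⁻¹' Icc (1 - x) 1 ∩ Ioo 0 1 ⊆ Icc (1 - x / t) 1 := by
      rintro y ⟨⟨hgy, -⟩, hy0, hy1⟩
      refine ⟨?_, hy1.le⟩
      suffices 1 - y ≤ x / t by linarith
      rw [le_div_iff₀ ht]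
      rcases le_or_gt (1 - y) γ with hyγ | hγy
      · have := hgt (1 - y) ⟨by linarith, hyγ⟩
        rw [sub_sub_cancel] at this
        linarith
      · have hγ_lt := hgt γ ⟨hγ.1, le_rfl⟩
        have hmono := hg ⟨hy0.le, hy1.le⟩ ⟨by linarith [hγ.2], by linarith [hγ.1]⟩
          (by linarith : y ≤ 1 - γ)
        rw [div_lt_iff₀ ht] at hxγ
        linarith
    calc μ (g ⁻¹' Icc (1 - x) 1) = μ (g ⁻¹' Icc (1 - x) 1 ∩ Ioo 0 1) :=
          (measure_inter_conull hμ.1.measure_compl_Ioo).symm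
      _ ≤ μ (Icc (1 - x / t) 1) := measure_mono hsub
      _ ≤ _ := (hμ.2 _ ⟨div_nonneg hx ht.le, hxγ.le.trans hγ.2⟩).2
  · exact prob_le_one.trans (ENNReal.one_le_ofReal.2 (hM _ hγx))

end Tails

theorem sum_ofReal_mul_le_ofReal_mul_rpow {ι : Type*} [Fintype ι] {p t : ι → ℝ}
    {M x α : ℝ} {a : ι → ENNReal} (hp : ∀ i, 0 ≤ p i) (hM : 0 ≤ M) (hx : 0 ≤ x)
    (ht : ∀ i, 0 < t i) (hsum : ∑ i, p i * t i ^ (-α) ≤ 1)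
    (ha : ∀ i, a i ≤ ENNReal.ofReal (M * (x / t i) ^ α)) :
    ∑ i, ENNReal.ofReal (p i) * a i ≤ ENNReal.ofReal (M * x ^ α) := by
  have hterm : ∀ i, p i * (M * (x / t i) ^ α) = M * x ^ α * (p i * t i ^ (-α)) := fun i => by
    rw [Real.div_rpow hx (ht i).le, Real.rpow_neg (ht i).le, div_eq_mul_inv]
    ring
  calc ∑ i, ENNReal.ofReal (p i) * a i
      ≤ ∑ i, ENNReal.ofReal (p i * (M * (x / t i) ^ α)) := by
        gcongr with i
        rw [ENNReal.ofReal_mul (hp i)]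
        gcongr
        exact ha i
    _ = ENNReal.ofReal (M * x ^ α * ∑ i, p i * t i ^ (-α)) := by
        rw [← ENNReal.ofReal_sum_of_nonneg fun i _ =>
          mul_nonneg (hp i) (mul_nonneg hM (Real.rpow_nonneg (div_nonneg hx (ht i).le) _))]
        simp_rw [hterm, Finset.mul_sum]
    _ ≤ ENNReal.ofReal (M * x ^ α) := ENNReal.ofReal_le_ofReal
        (mul_le_of_le_one_right (mul_nonneg hM (Real.rpow_nonneg hx _)) hsum)

theorem CPlus.mapsTo_Ioo {β : ℝ} {g : ℝ → ℝ} (hg : CPlus β g) (hinj : InjOn g (Icc 0 1)) :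
    MapsTo g (Ioo 0 1) (Ioo 0 1) := by
  intro y hy
  have hyI := Ioo_subset_Icc_self hy
  obtain ⟨hgy0, hgy1⟩ := hg.mapsTo hyI
  refine ⟨hgy0.lt_of_ne fun h => hy.1.ne' ?_, hgy1.lt_of_ne fun h => hy.2.ne ?_⟩
  · exact hinj hyI (left_mem_Icc.2 zero_le_one) (by rw [hg.map_zero, h])
  · exact hinj hyI (right_mem_Icc.2 zero_le_one) (by rw [hg.map_one, h])

section Markov

variable {k : ℕ} {g : Fin k → ℝ → ℝ} {p : Fin k → ℝ} {μ : Measure ℝ}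

theorem markovOp_apply (hmeas : ∀ i, Measurable (g i)) {s : Set ℝ}
    (hs : MeasurableSet s) :
    markovOp g p μ s = ∑ i, ENNReal.ofReal (p i) * μ (g i ⁻¹' s) := by
  simp only [markovOp, Measure.finsetSum_apply, Measure.smul_apply, smul_eq_mul,
    Measure.map_apply (hmeas _) hs]

theorem ProbVec.sum_ofReal (hp : ProbVec p) : ∑ i, ENNReal.ofReal (p i) = 1 := by
  rw [← ENNReal.ofReal_sum_of_nonneg fun i _ => hp.1 i, hp.2, ENNReal.ofReal_one]

theorem Admissible.memM1_markovOp {β : ℝ} (hadm : Admissible β g p)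
    (hmeas : ∀ i, Measurable (g i)) (hμ : MemM1 μ) : MemM1 (markovOp g p μ) := by
  have := hμ.1
  have hp : ProbVec p := ⟨fun i => (hadm.p_pos i).le, hadm.p_sum⟩
  have hpre : ∀ i, μ (g i ⁻¹' Ioo 0 1) = 1 := fun i =>
    le_antisymm prob_le_one (hμ.2 ▸ measure_mono
      ((hadm.cplus i).mapsTo_Ioo (hadm.homeo i).2.1))
  refine ⟨⟨?_⟩, ?_⟩
  · simp [markovOp_apply hmeas MeasurableSet.univ, hp.sum_ofReal]
  · simp [markovOp_apply hmeas measurableSet_Ioo, hpre, hp.sum_ofReal]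

end Markov

theorem dirac_half_mem_Nset {M α : ℝ} (hM : ∀ y, 1 / 2 ≤ y → 1 ≤ M * y ^ α) :
    Measure.dirac (1 / 2 : ℝ) ∈ Nset M α := by
  refine ⟨⟨inferInstance, Measure.dirac_apply_of_mem (by norm_num)⟩, fun x hx => ?_⟩
  rcases lt_or_ge x (1 / 2) with hx2 | hx2
  · simp only [Measure.dirac_apply' _ measurableSet_Icc]
    constructor
    · rw [indicator_of_notMem (fun h => by linarith [h.2])]; exact zero_le
    · rw [indicator_of_notMem (fun h => by linarith [h.1])]; exact zero_le
  · have hle (s : Set ℝ) : Measure.dirac (1 / 2 : ℝ) s ≤ ENNReal.ofReal (M * x ^ α) :=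
      prob_le_one.trans (ENNReal.one_le_ofReal.2 (hM x hx2))
    exact ⟨hle _, hle _⟩

theorem Admissible.markovOp_mem_Nset {β : ℝ} {k : ℕ} {g : Fin k → ℝ → ℝ}
    {p : Fin k → ℝ} (hadm : Admissible β g p) (hmeas : ∀ i, Measurable (g i))
    {M α γ : ℝ} {t u : Fin k → ℝ} (hγ : γ ∈ Ioc 0 1) (hM : ∀ y, γ ≤ y → 1 ≤ M * y ^ α)
    (ht : ∀ i, 0 < t i) (hu : ∀ i, 0 < u i) (ht_sum : ∑ i, p i * t i ^ (-α) ≤ 1)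
    (hu_sum : ∑ i, p i * u i ^ (-α) ≤ 1)
    (hgt : ∀ i, ∀ y ∈ Ioc 0 γ, t i * y < g i y)
    (hgu : ∀ i, ∀ y ∈ Ioc 0 γ, u i * y < 1 - g i (1 - y)) {μ : Measure ℝ}
    (hμ : μ ∈ Nset M α) : markovOp g p μ ∈ Nset M α := by
  have hp i : 0 ≤ p i := (hadm.p_pos i).le
  have hM₀ : 0 ≤ M := by simpa using zero_le_one.trans (hM 1 hγ.2)
  refine ⟨hadm.memM1_markovOp hmeas hμ.1, fun x hx => ⟨?_, ?_⟩⟩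
  · rw [markovOp_apply hmeas measurableSet_Icc]
    exact sum_ofReal_mul_le_ofReal_mul_rpow hp hM₀ hx.1 ht ht_sum fun i =>
      measure_preimage_Icc_zero_le hμ hγ hM (ht i) (hadm.cplus i).mono (hgt i) hx.1
  · rw [markovOp_apply hmeas measurableSet_Icc]
    exact sum_ofReal_mul_le_ofReal_mul_rpow hp hM₀ hx.1 hu hu_sum fun i =>
      measure_preimage_Icc_one_le hμ hγ hM (hu i) (hadm.cplus i).mono (hgu i) hx.1

/-- For every admissible IFS there are `M > 0` and `α ∈ (0,1)` such
that `N_{M,α}` is nonempty and invariant under the Markov operator. -/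
theorem exists_invariant_Nset (β : ℝ) (hβ : 0 < β) (k : ℕ)
    (g : Fin k → ℝ → ℝ) (p : Fin k → ℝ)
    (hmeas : ∀ i, Measurable (g i)) (hadm : Admissible β g p) :
    ∃ M > (0 : ℝ), ∃ α ∈ Ioo (0 : ℝ) 1, (Nset M α).Nonempty ∧
      ∀ μ ∈ Nset M α, markovOp g p μ ∈ Nset M α := by
  set d := fun i => derivWithin (g i) (Icc 0 1) 0
  set e := fun i => derivWithin (g i) (Icc 0 1) 1
  have hp i : 0 ≤ p i := (hadm.p_pos i).le
  obtain ⟨α, ⟨hd, he⟩, hα⟩ :=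
    (((eventually_sum_mul_rpow_neg_lt_one hadm.deriv0_pos hadm.p_sum hadm.lyap0).and
      (eventually_sum_mul_rpow_neg_lt_one hadm.deriv1_pos hadm.p_sum hadm.lyap1)).and
      (Ioo_mem_nhdsGT one_pos)).exists
  obtain ⟨θ, hθ, hsum₀⟩ := exists_sum_mul_rpow_neg_le_one hp hadm.deriv0_pos hα.1 hd
  obtain ⟨θ', hθ', hsum₁⟩ := exists_sum_mul_rpow_neg_le_one hp hadm.deriv1_pos hα.1 he
  have hedges :
      ∀ᶠ y in 𝓝[>] 0, ∀ i, θ * d i * y < g i y ∧ θ' * e i * y < 1 - g i (1 - y) :=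
    eventually_all.2 fun i =>
      ((hadm.cplus i).eventually_mul_lt_self hβ
        (mul_lt_of_lt_one_left (hadm.deriv0_pos i) hθ.2)).and
      ((hadm.cplus i).eventually_mul_lt_one_sub hβ
        (mul_lt_of_lt_one_left (hadm.deriv1_pos i) hθ'.2))
  obtain ⟨u, hu, hu_sub⟩ := mem_nhdsGT_iff_exists_Ioc_subset.1 hedges
  set γ := min u (1 / 2)
  have hγ : γ ∈ Ioc 0 1 := ⟨lt_min hu (by norm_num), (min_le_right _ _).trans (by norm_num)⟩
  have hγ_sub : Ioc 0 γ ⊆ Ioc 0 u := Ioc_subset_Ioc_right (min_le_left _ _)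
  have hM y (hy : γ ≤ y) : 1 ≤ γ ^ (-α) * y ^ α :=
    one_le_rpow_neg_mul_rpow hγ.1 hy hα.1.le
  refine ⟨γ ^ (-α), Real.rpow_pos_of_pos hγ.1 _, α, hα,
    ⟨_, dirac_half_mem_Nset fun y hy => hM y ((min_le_right _ _).trans hy)⟩,
    fun μ => hadm.markovOp_mem_Nset hmeas hγ hM (fun i => mul_pos hθ.1 (hadm.deriv0_pos i))
      (fun i => mul_pos hθ'.1 (hadm.deriv1_pos i)) hsum₀ hsum₁
      (fun i y hy => (hu_sub (hγ_sub hy) i).1) (fun i y hy => (hu_sub (hγ_sub hy) i).2)⟩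

end
end

section
/- Let (S,p) and (S_n,p), n ∈ ℕ, be Iterated Function Systems on [0,1] with continuous maps such that d_0((S_n,p),(S,p)) → 0 as n → ∞, and suppose that for some fixed M > 0 and α ∈ (0,1), each (S_n,p) has an invariant measure μ_n ∈ N_{M,α}. Then (μ_n) admits a subsequence converging weakly to a measure μ which is invariant for the Markov operator of (S,p); moreover μ ∈ N_{M,α}. -/
open MeasureTheory Set Filter Topology

noncomputable section

open scoped ENNReal BoundedContinuousFunction

/-! All the `μ n` are carried by the compact interval `[0,1]`, so by Prokhorov's theorem a
subsequence converges weakly to a probability measure `ν`, again carried by `[0,1]`.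
The portmanteau inequality `ν U ≤ liminf μ n U` on the open neighbourhoods `Iio y` and
`Ioi (1 - y)` of `[0,x]` and `[1-x,1]`, together with the continuity of `y ↦ M y^α`, gives the
bounds of `N_{M,α}` for `ν`; at `x = 0` they show that `ν` does not charge the endpoints.
Invariance passes to the limit because, for bounded continuous `g`,
`∫ g ∘ Sₙᵢ dμₙ - ∫ g ∘ Sᵢ dμₙ → 0` (the maps converge uniformly on `[0,1]`, where `g` is
uniformly continuous) while `∫ g ∘ Sᵢ dμₙ → ∫ g ∘ Sᵢ dν` by weak convergence. -/

lemma memM1_iff_ae_mem_Ioo {μ : Measure ℝ} [IsProbabilityMeasure μ] :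
    MemM1 μ ↔ ∀ᵐ x ∂μ, x ∈ Ioo (0 : ℝ) 1 := by
  rw [MemM1, and_iff_right ‹_›, ← measure_univ (μ := μ)]
  exact (ae_iff_measure_eq measurableSet_Ioo.nullMeasurableSet).symm

lemma MemM1.ae_mem_Icc {μ : Measure ℝ} (h : MemM1 μ) : ∀ᵐ x ∂μ, x ∈ Icc (0 : ℝ) 1 :=
  haveI := h.1
  (memM1_iff_ae_mem_Ioo.mp h).mono fun _ hx => Ioo_subset_Icc_self hx

lemma abs_sub_le_dzero {k : ℕ} {S T : Fin k → ℝ → ℝ} (p q : Fin k → ℝ)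
    (hS : ∀ i, MapsTo (S i) (Icc 0 1) (Icc 0 1)) (hT : ∀ i, MapsTo (T i) (Icc 0 1) (Icc 0 1))
    (i : Fin k) {x : ℝ} (hx : x ∈ Icc (0 : ℝ) 1) :
    |S i x - T i x| ≤ dzero S T p q := by
  have hbdd : BddAbove ((fun x => |S i x - T i x|) '' Icc 0 1) := by
    refine ⟨1, ?_⟩
    rintro _ ⟨y, hy, rfl⟩
    obtain ⟨hS0, hS1⟩ := hS i hy
    obtain ⟨hT0, hT1⟩ := hT i hy
    exact abs_sub_le_iff.mpr ⟨by linarith, by linarith⟩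
  have hterm_nonneg : ∀ j, 0 ≤ |p j - q j| + supOn (Icc 0 1) (fun x => S j x - T j x) :=
    fun j => add_nonneg (abs_nonneg _) (Real.sSup_nonneg fun _ ⟨_, _, h⟩ => h ▸ abs_nonneg _)
  calc |S i x - T i x| ≤ supOn (Icc 0 1) (fun x => S i x - T i x) := le_csSup hbdd ⟨x, hx, rfl⟩
    _ ≤ |p i - q i| + supOn (Icc 0 1) (fun x => S i x - T i x) :=
        le_add_of_nonneg_left (abs_nonneg _)
    _ ≤ dzero S T p q := Finset.single_le_sum (fun j _ => hterm_nonneg j) (Finset.mem_univ i)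

instance {k : ℕ} (g : Fin k → ℝ → ℝ) (p : Fin k → ℝ) (μ : Measure ℝ) [IsFiniteMeasure μ] :
    IsFiniteMeasure (markovOp g p μ) := by
  refine ⟨?_⟩
  simp only [markovOp, Measure.coe_finsetSum, Finset.sum_apply, Measure.smul_apply, smul_eq_mul]
  exact ENNReal.sum_lt_top.mpr fun i _ =>
    ENNReal.mul_lt_top ENNReal.ofReal_lt_top (measure_lt_top _ _)

lemma integral_markovOp {k : ℕ} {g : Fin k → ℝ → ℝ} (hg : ∀ i, Measurable (g i))
    {p : Fin k → ℝ} (hp : ∀ i, 0 ≤ p i) (μ : Measure ℝ) [IsFiniteMeasure μ] (f : ℝ →ᵇ ℝ) :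
    ∫ x, f x ∂(markovOp g p μ) = ∑ i, p i * ∫ x, f (g i x) ∂μ := by
  rw [markovOp, integral_finsetSum_measure fun i _ =>
    (f.integrable _).smul_measure ENNReal.ofReal_ne_top]
  refine Finset.sum_congr rfl fun i _ => ?_
  rw [integral_smul_measure, integral_map (hg i).aemeasurable f.continuous.aestronglyMeasurable,
    ENNReal.toReal_ofReal (hp i), smul_eq_mul]

def extendIcc (f : ℝ → ℝ) (hf : ContinuousOn f (Icc 0 1)) : ℝ →ᵇ ℝ :=
  (BoundedContinuousFunction.mkOfCompact
      ⟨(Icc (0 : ℝ) 1).domRestrict f, hf.domRestrict⟩).compContinuous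
    ⟨projIcc 0 1 zero_le_one, continuous_projIcc⟩

lemma extendIcc_apply_of_mem {f : ℝ → ℝ} (hf : ContinuousOn f (Icc 0 1)) {x : ℝ}
    (hx : x ∈ Icc (0 : ℝ) 1) : extendIcc f hf x = f x := by
  simp [extendIcc, projIcc_of_mem _ hx, Set.domRestrict]

lemma exists_subseq_tendsto_of_ae_mem_isCompact {E : Type*} [MetricSpace E]
    [TopologicalSpace.SeparableSpace E] [MeasurableSpace E] [BorelSpace E]
    {K : Set E} (hK : IsCompact K) (μs : ℕ → ProbabilityMeasure E)
    (hμs : ∀ n, ∀ᵐ x ∂(μs n : Measure E), x ∈ K) :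
    ∃ φ : ℕ → ℕ, StrictMono φ ∧ ∃ ν : ProbabilityMeasure E, Tendsto (μs ∘ φ) atTop (𝓝 ν) := by
  have htight : IsTightMeasureSet {(μ : Measure E) | μ ∈ range μs} :=
    isTightMeasureSet_iff_exists_isCompact_measure_compl_le.mpr fun _ _ =>
      ⟨K, hK, by rintro _ ⟨_, ⟨n, rfl⟩, rfl⟩; exact (ae_iff.mp (hμs n)).trans_le zero_le⟩
  obtain ⟨ν, -, φ, hφ, hlim⟩ := (isCompact_closure_of_isTightMeasureSet htight).tendsto_subseq
    fun n => subset_closure (mem_range_self n)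
  exact ⟨φ, hφ, ν, hlim⟩

section LimitsAlongFilters

variable {ι : Type*} {L : Filter ι}

section Portmanteau

variable {Ω : Type*} [MeasurableSpace Ω] [TopologicalSpace Ω] [OpensMeasurableSpace Ω]
  [HasOuterApproxClosed Ω] {μs : ι → ProbabilityMeasure Ω} {ν : ProbabilityMeasure Ω}

lemma ae_mem_of_tendsto_of_isClosed [L.NeBot] (hlim : Tendsto μs L (𝓝 ν))
    {F : Set Ω} (hF : IsClosed F) (hμs : ∀ i, ∀ᵐ x ∂(μs i : Measure Ω), x ∈ F) :
    ∀ᵐ x ∂(ν : Measure Ω), x ∈ F := by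
  have hnull : ∀ i, (μs i : Measure Ω) Fᶜ = 0 := fun i => ae_iff.mp (hμs i)
  refine ae_iff.mpr (le_antisymm ?_ zero_le)
  calc (ν : Measure Ω) Fᶜ ≤ L.liminf fun i => (μs i : Measure Ω) Fᶜ :=
        ProbabilityMeasure.le_liminf_measure_open_of_tendsto hlim hF.isOpen_compl
    _ = 0 := by simp [hnull]

lemma measure_le_of_tendsto_of_forall_isOpen [L.NeBot] (hlim : Tendsto μs L (𝓝 ν))
    {β : Type*} {s : Set Ω} {U : β → Set Ω} {b : β → ℝ≥0∞} {l : Filter β} [l.NeBot]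
    {c : ℝ≥0∞} (hU : ∀ᶠ y in l, IsOpen (U y) ∧ s ⊆ U y ∧ ∀ i, (μs i : Measure Ω) (U y) ≤ b y)
    (hb : Tendsto b l (𝓝 c)) :
    (ν : Measure Ω) s ≤ c := by
  refine ge_of_tendsto hb (hU.mono fun y ⟨hopen, hsU, hbound⟩ => ?_)
  calc (ν : Measure Ω) s ≤ (ν : Measure Ω) (U y) := measure_mono hsU
    _ ≤ L.liminf fun i => (μs i : Measure Ω) (U y) :=
        ProbabilityMeasure.le_liminf_measure_open_of_tendsto hlim hopen
    _ ≤ b y := liminf_le_of_frequently_le' (Frequently.of_forall hbound)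

end Portmanteau

lemma mem_Nset_of_tendsto [L.NeBot] {M α : ℝ} (hα : 0 < α) {μs : ι → ProbabilityMeasure ℝ}
    {ν : ProbabilityMeasure ℝ} (hlim : Tendsto μs L (𝓝 ν))
    (hμs : ∀ i, (μs i : Measure ℝ) ∈ Nset M α) :
    (ν : Measure ℝ) ∈ Nset M α := by
  have hμI : ∀ i, ∀ᵐ x ∂(μs i : Measure ℝ), x ∈ Icc (0 : ℝ) 1 := fun i => (hμs i).1.ae_mem_Icc
  -- Truncating at `min y 1` keeps the `N_{M,α}` bound available for `y > 1` (needed when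
  -- `x = 1`) while keeping it continuous in `y`.
  set b : ℝ → ℝ≥0∞ := fun y => ENNReal.ofReal (M * min y 1 ^ α) with hb_def
  have hb : ∀ x ∈ Icc (0 : ℝ) 1, Tendsto b (𝓝[>] x) (𝓝 (ENNReal.ofReal (M * x ^ α))) := by
    intro x hx
    have hcont : Continuous b := ENNReal.continuous_ofReal.comp <| continuous_const.mul <|
      (Real.continuous_rpow_const hα.le).comp (continuous_id.min continuous_const)
    simpa [hb_def, min_eq_left hx.2] using (hcont.tendsto x).mono_left nhdsWithin_le_nhds
  have hbound : ∀ x ∈ Icc (0 : ℝ) 1,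
      (ν : Measure ℝ) (Icc 0 x) ≤ ENNReal.ofReal (M * x ^ α) ∧
      (ν : Measure ℝ) (Icc (1 - x) 1) ≤ ENNReal.ofReal (M * x ^ α) := by
    intro x hx
    constructor
    · refine measure_le_of_tendsto_of_forall_isOpen hlim (U := Iio) ?_ (hb x hx)
      filter_upwards [self_mem_nhdsWithin] with y (hy : x < y)
      refine ⟨isOpen_Iio, fun z hz => hz.2.trans_lt hy, fun i => ?_⟩
      calc (μs i : Measure ℝ) (Iio y) ≤ (μs i : Measure ℝ) (Icc 0 (min y 1)) :=
            measure_mono_ae <| (hμI i).mono fun z hz hzy => ⟨hz.1, le_min (le_of_lt hzy) hz.2⟩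
        _ ≤ b y := ((hμs i).2 _ ⟨le_min (hx.1.trans hy.le) zero_le_one, min_le_right _ _⟩).1
    · refine measure_le_of_tendsto_of_forall_isOpen hlim (U := fun y => Ioi (1 - y)) ?_ (hb x hx)
      filter_upwards [self_mem_nhdsWithin] with y (hy : x < y)
      refine ⟨isOpen_Ioi, fun z hz => by simp only [mem_Ioi]; linarith [hz.1], fun i => ?_⟩
      calc (μs i : Measure ℝ) (Ioi (1 - y)) ≤ (μs i : Measure ℝ) (Icc (1 - min y 1) 1) := by
            refine measure_mono_ae <| (hμI i).mono fun z hz (hzy : 1 - y < z) => ⟨?_, hz.2⟩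
            have : 1 - z ≤ min y 1 := le_min (by linarith) (by linarith [hz.1])
            linarith
        _ ≤ b y := ((hμs i).2 _ ⟨le_min (hx.1.trans hy.le) zero_le_one, min_le_right _ _⟩).2
  have hzero : ENNReal.ofReal (M * 0 ^ α) = 0 := by
    rw [Real.zero_rpow hα.ne', mul_zero, ENNReal.ofReal_zero]
  have h0 : (ν : Measure ℝ) {0} = 0 := by
    simpa [hzero] using (hbound 0 (left_mem_Icc.mpr zero_le_one)).1
  have h1 : (ν : Measure ℝ) {1} = 0 := by
    simpa [hzero] using (hbound 0 (left_mem_Icc.mpr zero_le_one)).2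
  refine ⟨memM1_iff_ae_mem_Ioo.mpr ?_, hbound⟩
  filter_upwards [ae_mem_of_tendsto_of_isClosed hlim isClosed_Icc hμI,
    measure_eq_zero_iff_ae_notMem.mp h0, measure_eq_zero_iff_ae_notMem.mp h1] with x hx hx0 hx1
  exact ⟨hx.1.lt_of_ne (Ne.symm hx0), hx.2.lt_of_ne hx1⟩

lemma tendstoUniformlyOn_of_tendsto_dzero {k : ℕ} {Ss : ι → Fin k → ℝ → ℝ}
    {S : Fin k → ℝ → ℝ} {ps : ι → Fin k → ℝ} {p : Fin k → ℝ}
    (hSs : ∀ n i, MapsTo (Ss n i) (Icc 0 1) (Icc 0 1)) (hS : ∀ i, MapsTo (S i) (Icc 0 1) (Icc 0 1))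
    (hlim : Tendsto (fun n => dzero (Ss n) S (ps n) p) L (𝓝 0)) (i : Fin k) :
    TendstoUniformlyOn (fun n => Ss n i) (S i) L (Icc 0 1) := by
  refine Metric.tendstoUniformlyOn_iff.mpr fun ε hε => ?_
  filter_upwards [hlim.eventually (gt_mem_nhds hε)] with n hn x hx
  rw [Real.dist_eq, abs_sub_comm]
  exact (abs_sub_le_dzero _ _ (hSs n) hS i hx).trans_lt hn

lemma tendsto_integral_sub_of_tendstoUniformlyOn {Ω : Type*} [MeasurableSpace Ω]
    {μs : ι → ProbabilityMeasure Ω} {s : Set Ω} (hμs : ∀ i, ∀ᵐ x ∂(μs i : Measure Ω), x ∈ s)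
    {Fs : ι → Ω → ℝ} {F : Ω → ℝ} (hFs : ∀ i, Integrable (Fs i) (μs i))
    (hF : ∀ i, Integrable F (μs i)) (hunif : TendstoUniformlyOn Fs F L s) :
    Tendsto (fun i => ∫ x, Fs i x ∂(μs i : Measure Ω) - ∫ x, F x ∂(μs i : Measure Ω)) L
      (𝓝 0) := by
  refine Metric.tendsto_nhds.mpr fun ε hε => ?_
  filter_upwards [Metric.tendstoUniformlyOn_iff.mp hunif (ε / 2) (half_pos hε)] with i hi
  have hbound : ∀ᵐ x ∂(μs i : Measure Ω), ‖Fs i x - F x‖ ≤ ε / 2 :=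
    (hμs i).mono fun x hx => by simpa [dist_comm, Real.dist_eq] using (hi x hx).le
  calc dist (∫ x, Fs i x ∂(μs i : Measure Ω) - ∫ x, F x ∂(μs i : Measure Ω)) 0
      = ‖∫ x, (Fs i x - F x) ∂(μs i : Measure Ω)‖ := by
        rw [dist_zero_right, integral_sub (hFs i) (hF i)]
    _ ≤ ε / 2 := by simpa using norm_integral_le_of_norm_le_const hbound
    _ < ε := half_lt_self hε

section WeakConvergenceOnUnitInterval

variable {μs : ι → ProbabilityMeasure ℝ} {ν : ProbabilityMeasure ℝ}

lemma tendsto_integral_of_continuousOn (hlim : Tendsto μs L (𝓝 ν))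
    (hμs : ∀ i, ∀ᵐ x ∂(μs i : Measure ℝ), x ∈ Icc (0 : ℝ) 1)
    (hν : ∀ᵐ x ∂(ν : Measure ℝ), x ∈ Icc (0 : ℝ) 1) {f : ℝ → ℝ} (hf : ContinuousOn f (Icc 0 1)) :
    Tendsto (fun i => ∫ x, f x ∂(μs i : Measure ℝ)) L (𝓝 (∫ x, f x ∂(ν : Measure ℝ))) := by
  have hext : ∀ μ : Measure ℝ, (∀ᵐ x ∂μ, x ∈ Icc (0 : ℝ) 1) →
      ∫ x, extendIcc f hf x ∂μ = ∫ x, f x ∂μ :=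
    fun μ hμ => integral_congr_ae (hμ.mono fun x hx => extendIcc_apply_of_mem hf hx)
  simpa only [hext _ (hμs _), hext _ hν] using
    ProbabilityMeasure.tendsto_iff_forall_integral_tendsto.mp hlim (extendIcc f hf)

lemma tendsto_integral_comp_of_tendstoUniformlyOn (hlim : Tendsto μs L (𝓝 ν))
    (hμs : ∀ i, ∀ᵐ x ∂(μs i : Measure ℝ), x ∈ Icc (0 : ℝ) 1)
    (hν : ∀ᵐ x ∂(ν : Measure ℝ), x ∈ Icc (0 : ℝ) 1)
    {fs : ι → ℝ → ℝ} {f : ℝ → ℝ} (hfs : ∀ i, Measurable (fs i)) (hf : Measurable f)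
    (hf_cont : ContinuousOn f (Icc 0 1)) (hfs_mapsTo : ∀ i, MapsTo (fs i) (Icc 0 1) (Icc 0 1))
    (hf_mapsTo : MapsTo f (Icc 0 1) (Icc 0 1)) (hunif : TendstoUniformlyOn fs f L (Icc 0 1))
    (g : ℝ →ᵇ ℝ) :
    Tendsto (fun i => ∫ x, g (fs i x) ∂(μs i : Measure ℝ)) L
      (𝓝 (∫ x, g (f x) ∂(ν : Measure ℝ))) := by
  have hint : ∀ h : ℝ → ℝ, Measurable h → ∀ i, Integrable (fun x => g (h x)) (μs i) :=
    fun h hh i => .of_bound (g.continuous.measurable.comp hh).aestronglyMeasurable ‖g‖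
      (ae_of_all _ fun x => g.norm_coe_le_norm _)
  have hgunif : TendstoUniformlyOn (fun i x => g (fs i x)) (fun x => g (f x)) L (Icc 0 1) :=
    (isCompact_Icc.uniformContinuousOn_of_continuous g.continuous.continuousOn)
      |>.comp_tendstoUniformlyOn_eventually (.of_forall hfs_mapsTo) hf_mapsTo hunif
  have hdiff := tendsto_integral_sub_of_tendstoUniformlyOn hμs (fun i => hint _ (hfs i) i)
    (hint _ hf) hgunif
  have hlimf := tendsto_integral_of_continuousOn hlim hμs hν
    (g.continuous.comp_continuousOn hf_cont)
  simpa using hdiff.add hlimf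

lemma markovOp_eq_self_of_tendsto [L.NeBot] {k : ℕ} {gs : ι → Fin k → ℝ → ℝ}
    {g : Fin k → ℝ → ℝ} {p : Fin k → ℝ} (hp : ∀ i, 0 ≤ p i)
    (hgs : ∀ n i, Measurable (gs n i)) (hg : ∀ i, Measurable (g i))
    (hg_cont : ∀ i, ContinuousOn (g i) (Icc 0 1))
    (hgs_mapsTo : ∀ n i, MapsTo (gs n i) (Icc 0 1) (Icc 0 1))
    (hg_mapsTo : ∀ i, MapsTo (g i) (Icc 0 1) (Icc 0 1))
    (hunif : ∀ i, TendstoUniformlyOn (fun n => gs n i) (g i) L (Icc 0 1))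
    (hlim : Tendsto μs L (𝓝 ν)) (hμs : ∀ n, ∀ᵐ x ∂(μs n : Measure ℝ), x ∈ Icc (0 : ℝ) 1)
    (hν : ∀ᵐ x ∂(ν : Measure ℝ), x ∈ Icc (0 : ℝ) 1)
    (hinv : ∀ n, markovOp (gs n) p (μs n) = μs n) :
    markovOp g p ν = ν := by
  refine ext_of_forall_integral_eq_of_IsFiniteMeasure fun f => ?_
  have hstep : ∀ n, ∫ x, f x ∂(μs n : Measure ℝ) =
      ∑ i, p i * ∫ x, f (gs n i x) ∂(μs n : Measure ℝ) :=
    fun n => by rw [← integral_markovOp (hgs n) hp, hinv n]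
  have hlim_markov : Tendsto (fun n => ∫ x, f x ∂(μs n : Measure ℝ)) L
      (𝓝 (∫ x, f x ∂(markovOp g p ν))) := by
    simp_rw [hstep, integral_markovOp hg hp]
    exact tendsto_finsetSum _ fun i _ => .const_mul _ <|
      tendsto_integral_comp_of_tendstoUniformlyOn hlim hμs hν (fun n => hgs n i) (hg i)
        (hg_cont i) (fun n => hgs_mapsTo n i) (hg_mapsTo i) (hunif i) f
  exact tendsto_nhds_unique hlim_markov
    (ProbabilityMeasure.tendsto_iff_forall_integral_tendsto.mp hlim f)

end WeakConvergenceOnUnitInterval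

end LimitsAlongFilters

theorem limit_of_invariant_measures_general (k : ℕ)
    (Sseq : ℕ → Fin k → ℝ → ℝ) (Slim : Fin k → ℝ → ℝ) (p : Fin k → ℝ)
    (hp : ProbVec p)
    (hm : ∀ i, Measurable (Slim i)) (hc : ∀ i, ContinuousOn (Slim i) (Icc (0 : ℝ) 1))
    (ht : ∀ i, MapsTo (Slim i) (Icc (0 : ℝ) 1) (Icc (0 : ℝ) 1))
    (hmn : ∀ n i, Measurable (Sseq n i))
    (htn : ∀ n i, MapsTo (Sseq n i) (Icc (0 : ℝ) 1) (Icc (0 : ℝ) 1))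
    (M α : ℝ) (hα : α ∈ Ioo (0 : ℝ) 1)
    (μ : ℕ → Measure ℝ) (hμ : ∀ n, μ n ∈ Nset M α)
    (hinv : ∀ n, markovOp (Sseq n) p (μ n) = μ n)
    (hconv : Tendsto (fun n => dzero (Sseq n) Slim p p) atTop (𝓝 0)) :
    ∃ φ : ℕ → ℕ, StrictMono φ ∧ ∃ ν : Measure ℝ, ν ∈ Nset M α ∧
      markovOp Slim p ν = ν ∧
      ∀ f : ℝ → ℝ, Continuous f →
        Tendsto (fun n => ∫ x, f x ∂(μ (φ n))) atTop (𝓝 (∫ x, f x ∂ν)) := by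
  let μs : ℕ → ProbabilityMeasure ℝ := fun n => ⟨μ n, (hμ n).1.1⟩
  have hμI : ∀ n, ∀ᵐ x ∂μ n, x ∈ Icc (0 : ℝ) 1 := fun n => (hμ n).1.ae_mem_Icc
  obtain ⟨φ, hφ, ν, hlim⟩ := exists_subseq_tendsto_of_ae_mem_isCompact isCompact_Icc μs hμI
  have hνI := ae_mem_of_tendsto_of_isClosed hlim isClosed_Icc fun n => hμI (φ n)
  have hunif := tendstoUniformlyOn_of_tendsto_dzero (fun n => htn (φ n)) ht
    (hconv.comp hφ.tendsto_atTop)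
  refine ⟨φ, hφ, ν, mem_Nset_of_tendsto hα.1 hlim fun n => hμ (φ n), ?_,
    fun f hf => tendsto_integral_of_continuousOn hlim (fun n => hμI (φ n)) hνI hf.continuousOn⟩
  exact markovOp_eq_self_of_tendsto hp.1 (fun n => hmn (φ n)) hm hc (fun n => htn (φ n)) ht hunif
    hlim (fun n => hμI (φ n)) hνI fun n => hinv (φ n)

/-- If IFSs `(Sseq n, p)` converge to `(Slim, p)` in `d₀` and their
invariant measures all lie in a fixed `N_{M,α}`, then some subsequence of the
invariant measures converges weakly to a measure invariant for `(Slim, p)`,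
which moreover lies in `N_{M,α}`. -/
theorem limit_of_invariant_measures (k : ℕ)
    (Sseq : ℕ → Fin k → ℝ → ℝ) (Slim : Fin k → ℝ → ℝ) (p : Fin k → ℝ)
    (hp : ProbVec p)
    (hm : ∀ i, Measurable (Slim i)) (hc : ∀ i, ContinuousOn (Slim i) (Icc (0 : ℝ) 1))
    (ht : ∀ i, MapsTo (Slim i) (Icc (0 : ℝ) 1) (Icc (0 : ℝ) 1))
    (hmn : ∀ n i, Measurable (Sseq n i))
    (hcn : ∀ n i, ContinuousOn (Sseq n i) (Icc (0 : ℝ) 1))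
    (htn : ∀ n i, MapsTo (Sseq n i) (Icc (0 : ℝ) 1) (Icc (0 : ℝ) 1))
    (M α : ℝ) (hM : 0 < M) (hα : α ∈ Ioo (0 : ℝ) 1)
    (μ : ℕ → Measure ℝ) (hμ : ∀ n, μ n ∈ Nset M α)
    (hinv : ∀ n, markovOp (Sseq n) p (μ n) = μ n)
    (hconv : Tendsto (fun n => dzero (Sseq n) Slim p p) atTop (𝓝 0)) :
    ∃ φ : ℕ → ℕ, StrictMono φ ∧ ∃ ν : Measure ℝ, ν ∈ Nset M α ∧
      markovOp Slim p ν = ν ∧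
      ∀ f : ℝ → ℝ, Continuous f →
        Tendsto (fun n => ∫ x, f x ∂(μ (φ n))) atTop (𝓝 (∫ x, f x ∂ν)) :=
  limit_of_invariant_measures_general k Sseq Slim p hp hm hc ht hmn htn M α hα μ hμ hinv hconv
end
end
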